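/- Let V be a generalized Eulerian A_n(K)-module and let 1 ≤ r ≤ n. Then for every ν ≥ 0, the Koszul cohomology H^ν(X_1, …, X_{r−1}, ∂_r, ∂_{r+1}, …, ∂_n ; V) is a graded K-vector space concentrated in degree −n + r − 1. -/
import Mathlib

/-! ### The Weyl algebra `A_n(K)` as a quotient of the free algebra. -/

/-- The defining relations of the `n`-th Weyl algebra: the `X_i` commute, the `∂_i` commute,
and `∂_i X_j = X_j ∂_i + δ_{ij}`. -/
inductive WeylRel (K : Type) [Field K] (n : ℕ) :
    FreeAlgebra K (Fin n ⊕ Fin n) → FreeAlgebra K (Fin n ⊕ Fin n) → Prop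
  | xx (i j : Fin n) : WeylRel K n
      (FreeAlgebra.ι K (Sum.inl i) * FreeAlgebra.ι K (Sum.inl j))
      (FreeAlgebra.ι K (Sum.inl j) * FreeAlgebra.ι K (Sum.inl i))
  | dd (i j : Fin n) : WeylRel K n
      (FreeAlgebra.ι K (Sum.inr i) * FreeAlgebra.ι K (Sum.inr j))
      (FreeAlgebra.ι K (Sum.inr j) * FreeAlgebra.ι K (Sum.inr i))
  | dx (i j : Fin n) : WeylRel K n
      (FreeAlgebra.ι K (Sum.inr i) * FreeAlgebra.ι K (Sum.inl j))
      (FreeAlgebra.ι K (Sum.inl j) * FreeAlgebra.ι K (Sum.inr i) + if i = j then 1 else 0)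

/-- The `n`-th Weyl algebra over `K`. -/
abbrev WeylAlgebra (K : Type) [Field K] (n : ℕ) : Type := RingQuot (WeylRel K n)

/-- The variable `X_i` (degree `+1`) in the Weyl algebra. -/
noncomputable def Wx (K : Type) [Field K] {n : ℕ} (i : Fin n) : WeylAlgebra K n :=
  RingQuot.mkAlgHom K (WeylRel K n) (FreeAlgebra.ι K (Sum.inl i))

/-- The partial derivative `∂_i` (degree `-1`) in the Weyl algebra. -/
noncomputable def Wd (K : Type) [Field K] {n : ℕ} (i : Fin n) : WeylAlgebra K n :=
  RingQuot.mkAlgHom K (WeylRel K n) (FreeAlgebra.ι K (Sum.inr i))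

/-- The Euler operator `ℰ_n = ∑ X_i ∂_i`. -/
noncomputable def weylEuler (K : Type) [Field K] (n : ℕ) : WeylAlgebra K n :=
  ∑ i : Fin n, Wx K i * Wd K i

/-- The Euler operator `ℰ_r = ∑_{i < r} X_i ∂_i` of the subalgebra `A_r(K) ⊆ A_n(K)`. -/
noncomputable def weylEulerUpTo (K : Type) [Field K] (n r : ℕ) : WeylAlgebra K n :=
  ∑ i ∈ Finset.univ.filter (fun i : Fin n => (i : ℕ) < r), Wx K i * Wd K i

/-- Monomials of degree `d` in the variables `X_1, …, X_n` inside the Weyl algebra. -/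
def xMonomials (K : Type) [Field K] (n d : ℕ) : Set (WeylAlgebra K n) :=
  {w | ∃ l : List (Fin n), l.length = d ∧ w = (l.map (Wx K)).prod}

/-- `f` is a homogeneous polynomial of degree `d` in `R = K[X_1, …, X_n] ⊆ A_n(K)`. -/
def IsHomogPoly (K : Type) [Field K] {n : ℕ} (f : WeylAlgebra K n) (d : ℕ) : Prop :=
  f ∈ Submodule.span K (xMonomials K n d)

/-! ### Graded (left) modules over the Weyl algebra. -/

/-- A graded left `A_n(K)`-module: a module over the Weyl algebra together with an internal
`ℤ`-grading, stable under `K` and such that `X_i` raises degree by one and `∂_i` lowers it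
by one. -/
structure GWM (K : Type) [Field K] (n : ℕ) where
  carrier : Type
  [acg : AddCommGroup carrier]
  [mod : Module (WeylAlgebra K n) carrier]
  deg : ℤ → AddSubgroup carrier
  isInternal : DirectSum.IsInternal deg
  k_smul : ∀ (c : K) (j : ℤ) (m : carrier), m ∈ deg j →
    algebraMap K (WeylAlgebra K n) c • m ∈ deg j
  x_smul : ∀ (i : Fin n) (j : ℤ) (m : carrier), m ∈ deg j → Wx K i • m ∈ deg (j + 1)
  d_smul : ∀ (i : Fin n) (j : ℤ) (m : carrier), m ∈ deg j → Wd K i • m ∈ deg (j - 1)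

attribute [instance] GWM.acg GWM.mod

instance {K : Type} [Field K] {n : ℕ} : CoeSort (GWM K n) Type := ⟨GWM.carrier⟩

/-- A graded `A_n(K)`-module is *generalized Eulerian* if every homogeneous element `z`
is killed by some power of `ℰ_n - |z|`. -/
def GWM.IsGenEulerian {K : Type} [Field K] {n : ℕ} (M : GWM K n) : Prop :=
  ∀ (j : ℤ) (m : M.carrier), m ∈ M.deg j →
    ∃ a : ℕ, 1 ≤ a ∧ ((weylEuler K n - (j : WeylAlgebra K n)) ^ a) • m = 0

/-- A graded module is concentrated in degree `d` if all other graded pieces vanish. -/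
def GWM.ConcentratedIn {K : Type} [Field K] {n : ℕ} (M : GWM K n) (d : ℤ) : Prop :=
  ∀ j : ℤ, j ≠ d → M.deg j = ⊥

/-! ### Koszul (co)homology of a graded module with respect to commuting operators.

The Koszul complex of operators `u : Fin c → A_n(K)` on `M` has, in homological level `i`,
the module of functions from `i`-element subsets of `Fin c` to `M`.  Cohomology `H^ν` is
homology in level `c - ν`. -/

/-- Level `i` of the Koszul complex on `c` operators with values in `M`. -/
abbrev KosLevel {K : Type} [Field K] {n : ℕ} (M : GWM K n) (c : ℕ) (i : ℤ) : Type :=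
  {S : Finset (Fin c) // (S.card : ℤ) = i} → M.carrier

/-- The Koszul differential (from level `a` to level `b`; it is the genuine differential
when `b = a - 1`): `(dψ)(T) = ∑_{k ∉ T} (-1)^{|{x ∈ T | x < k}|} u_k • ψ(T ∪ {k})`. -/
noncomputable def kosDiff {K : Type} [Field K] {n : ℕ} {M : GWM K n} {c : ℕ}
    (u : Fin c → WeylAlgebra K n) (a b : ℤ) (ψ : KosLevel M c a)
    (T : {S : Finset (Fin c) // (S.card : ℤ) = b}) : M.carrier :=
  ∑ k ∈ (T.1)ᶜ, ((-1 : ℤ) ^ ((T.1.filter (fun x => x < k)).card)) •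
    (u k • (if h : (((insert k T.1).card : ℤ)) = a then ψ ⟨insert k T.1, h⟩ else 0))

/-- A Koszul `i`-chain is a cycle if the differential to level `i - 1` kills it. -/
def kosIsCycle {K : Type} [Field K] {n : ℕ} {M : GWM K n} {c : ℕ}
    (u : Fin c → WeylAlgebra K n) (i : ℤ) (φ : KosLevel M c i) : Prop :=
  ∀ T, kosDiff u i (i - 1) φ T = 0

/-- A Koszul `i`-chain is a boundary if it is the image of an `(i+1)`-chain. -/
def kosIsBoundary {K : Type} [Field K] {n : ℕ} {M : GWM K n} {c : ℕ}
    (u : Fin c → WeylAlgebra K n) (i : ℤ) (φ : KosLevel M c i) : Prop :=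
  ∃ ψ : KosLevel M c (i + 1), (fun T => kosDiff u (i + 1) i ψ T) = φ

/-- A Koszul `i`-chain is homogeneous of (internal) degree `j`: on a subset `S` its value
lies in degree `j - ∑_{k ∈ S} deg u_k`, where `du k` is the degree of the operator `u k`. -/
def kosHomog {K : Type} [Field K] {n : ℕ} {M : GWM K n} {c : ℕ}
    (du : Fin c → ℤ) (i j : ℤ) (φ : KosLevel M c i) : Prop :=
  ∀ S : {S : Finset (Fin c) // (S.card : ℤ) = i}, φ S ∈ M.deg (j - ∑ k ∈ S.1, du k)

section
variable {K : Type} [Field K] {n : ℕ}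

lemma wd_wx (i j : Fin n) : Wd K i * Wx K j = Wx K j * Wd K i + if i = j then 1 else 0 := by
  have h := RingQuot.mkAlgHom_rel K (WeylRel.dx (K := K) (n := n) i j)
  simpa [Wd, Wx, map_mul, map_add, apply_ite (RingQuot.mkAlgHom K (WeylRel K n))] using h

lemma wx_comm (i j : Fin n) : Wx K i * Wx K j = Wx K j * Wx K i := by
  have h := RingQuot.mkAlgHom_rel K (WeylRel.xx (K := K) (n := n) i j)
  simpa [Wx, map_mul] using h

lemma wd_comm (i j : Fin n) : Wd K i * Wd K j = Wd K j * Wd K i := by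
  have h := RingQuot.mkAlgHom_rel K (WeylRel.dd (K := K) (n := n) i j)
  simpa [Wd, map_mul] using h

lemma euler_wx (i : Fin n) : weylEuler K n * Wx K i = Wx K i * (weylEuler K n + 1) := by
  unfold weylEuler
  rw [Finset.sum_mul, mul_add, mul_one, Finset.mul_sum]
  have : ∀ j ∈ Finset.univ, Wx K j * Wd K j * Wx K i
      = Wx K i * (Wx K j * Wd K j) + if j = i then Wx K i else 0 := by
    intro j _
    rw [mul_assoc, wd_wx j i, mul_add, mul_ite, mul_one, mul_zero, ← mul_assoc,
      wx_comm j i, mul_assoc]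
    congr 1
    rcases eq_or_ne j i with rfl | h
    · simp
    · simp [h]
  rw [Finset.sum_congr rfl this, Finset.sum_add_distrib, Finset.sum_ite_eq' Finset.univ i]
  simp

lemma euler_wd (i : Fin n) : weylEuler K n * Wd K i = Wd K i * (weylEuler K n - 1) := by
  unfold weylEuler
  rw [Finset.sum_mul, mul_sub, mul_one, Finset.mul_sum]
  have : ∀ j ∈ Finset.univ, Wx K j * Wd K j * Wd K i
      = Wd K i * (Wx K j * Wd K j) - if j = i then Wd K i else 0 := by
    intro j _
    have hcc : Wx K j * Wd K i * Wd K j = Wx K j * (Wd K j * Wd K i) := by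
      rw [mul_assoc, wd_comm i j]
    rw [← mul_assoc, wd_wx i j, add_mul, hcc, ite_mul, one_mul, zero_mul]
    rcases eq_or_ne j i with rfl | h
    · simp [mul_assoc]
    · simp [h, Ne.symm h, mul_assoc]
  rw [Finset.sum_congr rfl this, Finset.sum_sub_distrib, Finset.sum_ite_eq' Finset.univ i]
  simp


noncomputable def uo (K : Type) [Field K] (n r : ℕ) : Fin n → WeylAlgebra K n :=
  fun k => if (k : ℕ) < r - 1 then Wx K k else Wd K k

noncomputable def vo (K : Type) [Field K] (n r : ℕ) : Fin n → WeylAlgebra K n :=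
  fun k => if (k : ℕ) < r - 1 then Wd K k else Wx K k

def duf (n r : ℕ) : Fin n → ℤ := fun k => if (k : ℕ) < r - 1 then 1 else -1

lemma uv_comm {r : ℕ} (k l : Fin n) (h : k ≠ l) :
    uo K n r k * vo K n r l = vo K n r l * uo K n r k := by
  have h1 : Wd K l * Wx K k = Wx K k * Wd K l := by
    rw [wd_wx l k, if_neg (Ne.symm h), add_zero]
  have h2 : Wd K k * Wx K l = Wx K l * Wd K k := by
    rw [wd_wx k l, if_neg h, add_zero]
  unfold uo vo
  split_ifs
  · exact h1.symm
  · exact wx_comm k l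
  · exact wd_comm k l
  · exact h2

lemma euler_u {r : ℕ} (k : Fin n) :
    weylEuler K n * uo K n r k
      = uo K n r k * (weylEuler K n + ((duf n r k : ℤ) : WeylAlgebra K n)) := by
  unfold uo duf
  split_ifs with h
  · simpa using euler_wx k
  · simpa [sub_eq_add_neg] using euler_wd k

lemma op_sum {r : ℕ} (hr : 1 ≤ r) (hrn : r ≤ n) (T : Finset (Fin n)) :
    ∑ k : Fin n, (if k ∈ T then vo K n r k * uo K n r k else uo K n r k * vo K n r k)
      = weylEuler K n + (((∑ k ∈ T, duf n r k) + (n : ℤ) - (r : ℤ) + 1 : ℤ) : WeylAlgebra K n) := by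
  have termo : ∀ k : Fin n,
      (if k ∈ T then vo K n r k * uo K n r k else uo K n r k * vo K n r k)
      = Wx K k * Wd K k
        + (((if ((k ∈ T) ↔ ((k : ℕ) < r - 1)) then (1 : ℤ) else 0) : ℤ) : WeylAlgebra K n) := by
    intro k
    unfold uo vo
    by_cases hm : k ∈ T <;> by_cases hl : (k : ℕ) < r - 1 <;>
      simp [hm, hl, wd_wx k k]
  have termz : ∀ k : Fin n,
      (if ((k ∈ T) ↔ ((k : ℕ) < r - 1)) then (1 : ℤ) else 0)
      = (if k ∈ T then duf n r k else 0) + (if (k : ℕ) < r - 1 then 0 else 1) := by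
    intro k
    unfold duf
    by_cases hm : k ∈ T <;> by_cases hl : (k : ℕ) < r - 1 <;> simp [hm, hl]
  have hcount : ∑ k : Fin n, (if (k : ℕ) < r - 1 then (0 : ℤ) else 1)
      = (n : ℤ) - (r : ℤ) + 1 := by
    rw [Finset.sum_ite]
    have hfe : (Finset.univ.filter fun k : Fin n => ¬ (k : ℕ) < r - 1)
        = (Finset.Iio (⟨r - 1, by omega⟩ : Fin n))ᶜ := by
      ext k; simp [Fin.lt_def]
    rw [hfe]
    simp only [Finset.sum_const_zero, Finset.sum_const, zero_add, smul_eq_mul, mul_one]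
    rw [Finset.card_compl, Fin.card_Iio, Fintype.card_fin]
    have hv : ((⟨r - 1, by omega⟩ : Fin n) : ℕ) = r - 1 := rfl
    rw [hv, nsmul_eq_mul, mul_one, Nat.cast_sub (by omega : r - 1 ≤ n), Nat.cast_sub hr]
    push_cast
    ring
  calc ∑ k : Fin n, (if k ∈ T then vo K n r k * uo K n r k else uo K n r k * vo K n r k)
      = ∑ k : Fin n, (Wx K k * Wd K k
        + (((if ((k ∈ T) ↔ ((k : ℕ) < r - 1)) then (1 : ℤ) else 0) : ℤ) : WeylAlgebra K n)) :=
        Finset.sum_congr rfl fun k _ => termo k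
    _ = weylEuler K n
        + ((∑ k : Fin n, (if ((k ∈ T) ↔ ((k : ℕ) < r - 1)) then (1 : ℤ) else 0) : ℤ)
          : WeylAlgebra K n) := by
        rw [Finset.sum_add_distrib]; push_cast; rfl
    _ = _ := by
        have hz : (∑ k : Fin n, (if ((k ∈ T) ↔ ((k : ℕ) < r - 1)) then (1 : ℤ) else 0))
            = (∑ k ∈ T, duf n r k) + (n : ℤ) - (r : ℤ) + 1 := by
          rw [Finset.sum_congr rfl fun k _ => termz k, Finset.sum_add_distrib, hcount]
          have h3 : ∑ k : Fin n, (if k ∈ T then duf n r k else 0) = ∑ k ∈ T, duf n r k := by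
            rw [Finset.sum_ite_mem, Finset.univ_inter]
          rw [h3]; ring
        rw [hz]

example {M : GWM K n} (z : ℤ) (w : WeylAlgebra K n) (m : M.carrier) :
    z • (w • m) = w • (z • m) := by rw [smul_comm]

example {M : GWM K n} (z : ℤ) (m : M.carrier) :
    ((z : ℤ) : WeylAlgebra K n) • m = z • m := Int.cast_smul_eq_zsmul _ _ _

example (z : ℤ) : (algebraMap K (WeylAlgebra K n)) ((z : ℤ) : K) = ((z:ℤ) : WeylAlgebra K n) :=
  by rw [map_intCast]

example (α : K) (w : WeylAlgebra K n) :
    (algebraMap K (WeylAlgebra K n)) α * w = w * (algebraMap K (WeylAlgebra K n)) α :=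
  Algebra.commutes α w

noncomputable def kosHtp {K : Type} [Field K] {n : ℕ} {M : GWM K n} {c : ℕ}
    (v : Fin c → WeylAlgebra K n) (a b : ℤ) (ψ : KosLevel M c a)
    (S : {S : Finset (Fin c) // (S.card : ℤ) = b}) : M.carrier :=
  ∑ k ∈ S.1, ((-1 : ℤ) ^ (((S.1.erase k).filter (fun x => x < k)).card)) •
    (v k • (if h : (((S.1.erase k).card : ℤ)) = a then ψ ⟨S.1.erase k, h⟩ else 0))

lemma sign_lemma {c : ℕ} (S : Finset (Fin c)) (k l : Fin c) (hk : k ∉ S) (hl : l ∈ S) :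
    ((-1:ℤ) ^ ((S.filter (fun x => x < k)).card)
      * (-1) ^ (((insert k (S.erase l)).filter (fun x => x < l)).card))
    = -(((-1:ℤ)) ^ (((S.erase l).filter (fun x => x < l)).card)
      * (-1) ^ (((S.erase l).filter (fun x => x < k)).card)) := by
  have hkl : k ≠ l := fun h => hk (h ▸ hl)
  have hA : S.filter (fun x => x < k)
      = if l < k then insert l ((S.erase l).filter (fun x => x < k))
        else (S.erase l).filter (fun x => x < k) := by
    nth_rewrite 1 [← Finset.insert_erase hl]
    rw [Finset.filter_insert]
  have hB : (insert k (S.erase l)).filter (fun x => x < l)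
      = if k < l then insert k ((S.erase l).filter (fun x => x < l))
        else (S.erase l).filter (fun x => x < l) := Finset.filter_insert _ _ _
  rcases hkl.lt_or_gt with h | h
  · rw [hA, if_neg (asymm h), hB, if_pos h,
      Finset.card_insert_of_notMem (by simp [hk]), pow_succ]
    ring
  · rw [hA, if_pos h, hB, if_neg (asymm h),
      Finset.card_insert_of_notMem (by simp), pow_succ]
    ring

lemma shuf {M : GWM K n} (a b : ℤ) (w w' : WeylAlgebra K n) (m : M.carrier) :
    a • (w • (b • (w' • m))) = (a * b) • ((w * w') • m) := by
  rw [smul_comm w b, smul_smul, ← mul_smul w w' m]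

lemma homotopy_id {M : GWM K n} {c : ℕ} (u v : Fin c → WeylAlgebra K n)
    (huv : ∀ k l : Fin c, k ≠ l → u k * v l = v l * u k) (i : ℤ) (ψ : KosLevel M c i)
    (T : {S : Finset (Fin c) // (S.card : ℤ) = i}) :
    kosDiff u (i+1) i (fun S => kosHtp v i (i+1) ψ S) T
      + kosHtp v (i-1) i (fun S => kosDiff u i (i-1) ψ S) T
    = ∑ k : Fin c, ((if k ∈ T.1 then v k * u k else u k * v k) • ψ T) := by
  obtain ⟨t, ht⟩ := T
  have hins : ∀ k ∉ t, ((insert k t).card : ℤ) = i + 1 := by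
    intro k hk; rw [Finset.card_insert_of_notMem hk]; push_cast; omega
  have L1 : kosDiff u (i+1) i (fun S => kosHtp v i (i+1) ψ S) ⟨t, ht⟩
      = ∑ k ∈ tᶜ, ∑ l ∈ insert k t,
          (((-1:ℤ) ^ ((t.filter (fun x => x < k)).card)
            * (-1) ^ ((((insert k t).erase l).filter (fun x => x < l)).card))
          • ((u k * v l) •
            (if h : ((((insert k t).erase l).card : ℤ)) = i
              then ψ ⟨(insert k t).erase l, h⟩ else 0))) := by
    simp only [kosDiff]
    refine Finset.sum_congr rfl ?_
    intro k hk
    have hk' : k ∉ t := by simpa using hk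
    rw [dif_pos (hins k hk')]
    simp only [kosHtp]
    rw [Finset.smul_sum, Finset.smul_sum]
    exact Finset.sum_congr rfl fun l hl => shuf _ _ _ _ _
  have L2 : kosHtp v (i-1) i (fun S => kosDiff u i (i-1) ψ S) ⟨t, ht⟩
      = ∑ l ∈ t, ∑ k ∈ insert l tᶜ,
          (((-1:ℤ) ^ (((t.erase l).filter (fun x => x < l)).card)
            * (-1) ^ (((t.erase l).filter (fun x => x < k)).card))
          • ((v l * u k) •
            (if h : (((insert k (t.erase l)).card : ℤ)) = i
              then ψ ⟨insert k (t.erase l), h⟩ else 0))) := by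
    simp only [kosHtp]
    refine Finset.sum_congr rfl ?_
    intro l hl
    have hc : ((t.erase l).card : ℤ) = i - 1 := by
      rw [Finset.card_erase_of_mem hl,
        Nat.cast_sub (Finset.card_pos.mpr ⟨l, hl⟩)]
      push_cast; omega
    rw [dif_pos hc]
    simp only [kosDiff, Finset.compl_erase]
    rw [Finset.smul_sum, Finset.smul_sum]
    exact Finset.sum_congr rfl fun k hk => shuf _ _ _ _ _
  rw [L1, L2]
  have hsplit1 : ∀ k ∈ tᶜ, (∑ l ∈ insert k t,
          (((-1:ℤ) ^ ((t.filter (fun x => x < k)).card)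
            * (-1) ^ ((((insert k t).erase l).filter (fun x => x < l)).card))
          • ((u k * v l) •
            (if h : ((((insert k t).erase l).card : ℤ)) = i
              then ψ ⟨(insert k t).erase l, h⟩ else 0))))
      = (u k * v k) • ψ ⟨t, ht⟩ + ∑ l ∈ t,
          (((-1:ℤ) ^ ((t.filter (fun x => x < k)).card)
            * (-1) ^ ((((insert k t).erase l).filter (fun x => x < l)).card))
          • ((u k * v l) •
            (if h : ((((insert k t).erase l).card : ℤ)) = i
              then ψ ⟨(insert k t).erase l, h⟩ else 0))) := by
    intro k hk
    have hk' : k ∉ t := by simpa using hk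
    rw [Finset.sum_insert hk']
    congr 1
    rw [Finset.erase_insert hk', dif_pos ht, ← pow_add,
      Even.neg_one_pow ⟨_, rfl⟩, one_smul]
  have hsplit2 : ∀ l ∈ t, (∑ k ∈ insert l tᶜ,
          (((-1:ℤ) ^ (((t.erase l).filter (fun x => x < l)).card)
            * (-1) ^ (((t.erase l).filter (fun x => x < k)).card))
          • ((v l * u k) •
            (if h : (((insert k (t.erase l)).card : ℤ)) = i
              then ψ ⟨insert k (t.erase l), h⟩ else 0))))
      = (v l * u l) • ψ ⟨t, ht⟩ + ∑ k ∈ tᶜ,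
          (((-1:ℤ) ^ (((t.erase l).filter (fun x => x < l)).card)
            * (-1) ^ (((t.erase l).filter (fun x => x < k)).card))
          • ((v l * u k) •
            (if h : (((insert k (t.erase l)).card : ℤ)) = i
              then ψ ⟨insert k (t.erase l), h⟩ else 0))) := by
    intro l hl
    rw [Finset.sum_insert (by simpa using hl)]
    congr 1
    rw [Finset.insert_erase hl, dif_pos ht, ← pow_add,
      Even.neg_one_pow ⟨_, rfl⟩, one_smul]
  rw [Finset.sum_congr rfl hsplit1, Finset.sum_congr rfl hsplit2,
    Finset.sum_add_distrib, Finset.sum_add_distrib]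
  have hcross : (∑ k ∈ tᶜ, ∑ l ∈ t,
          (((-1:ℤ) ^ ((t.filter (fun x => x < k)).card)
            * (-1) ^ ((((insert k t).erase l).filter (fun x => x < l)).card))
          • ((u k * v l) •
            (if h : ((((insert k t).erase l).card : ℤ)) = i
              then ψ ⟨(insert k t).erase l, h⟩ else 0))))
      + (∑ l ∈ t, ∑ k ∈ tᶜ,
          (((-1:ℤ) ^ (((t.erase l).filter (fun x => x < l)).card)
            * (-1) ^ (((t.erase l).filter (fun x => x < k)).card))
          • ((v l * u k) •
            (if h : (((insert k (t.erase l)).card : ℤ)) = i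
              then ψ ⟨insert k (t.erase l), h⟩ else 0)))) = 0 := by
    rw [Finset.sum_comm, ← Finset.sum_add_distrib]
    refine Finset.sum_eq_zero fun k hk => ?_
    rw [← Finset.sum_add_distrib]
    refine Finset.sum_eq_zero fun l hl => ?_
    have hl' : l ∉ t := by simpa using hl
    have hkl : l ≠ k := fun h => hl' (h ▸ hk)
    have hset : (insert l t).erase k = insert l (t.erase k) :=
      Finset.erase_insert_of_ne hkl
    rw [hset, huv l k hkl, sign_lemma t l k hl' hk, neg_smul, neg_add_cancel]
  have assemble : ∀ a1 a2 c1 c2 rr : M.carrier,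
      c1 + c2 = 0 → a1 + a2 = rr → (a1 + c1) + (a2 + c2) = rr := by
    intro a1 a2 c1 c2 rr h1 h2
    rw [add_add_add_comm, h1, add_zero, h2]
  refine assemble _ _ _ _ _ hcross ?_
  rw [add_comm, ← Finset.sum_add_sum_compl t]
  congr 1
  · exact Finset.sum_congr rfl fun k hk => by rw [if_pos hk]
  · exact Finset.sum_congr rfl fun k hk => by rw [if_neg (by simpa using hk)]


lemma kosDiff_zero {M : GWM K n} {c : ℕ} (u : Fin c → WeylAlgebra K n) (a b : ℤ)
    (T : {S : Finset (Fin c) // (S.card : ℤ) = b}) :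
    kosDiff u a b (fun _ => (0 : M.carrier)) T = 0 := by
  simp [kosDiff]

lemma kosHtp_zero {M : GWM K n} {c : ℕ} (v : Fin c → WeylAlgebra K n) (a b : ℤ)
    (T : {S : Finset (Fin c) // (S.card : ℤ) = b}) :
    kosHtp v a b (fun _ => (0 : M.carrier)) T = 0 := by
  simp [kosHtp]

lemma kosDiff_sub {M : GWM K n} {c : ℕ} (u : Fin c → WeylAlgebra K n) (a b : ℤ)
    (ψ1 ψ2 : KosLevel M c a) (T : {S : Finset (Fin c) // (S.card : ℤ) = b}) :
    kosDiff u a b (fun S => ψ1 S - ψ2 S) T = kosDiff u a b ψ1 T - kosDiff u a b ψ2 T := by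
  simp only [kosDiff]
  rw [← Finset.sum_sub_distrib]
  refine Finset.sum_congr rfl fun k hk => ?_
  rw [← smul_sub, ← smul_sub]
  congr 1
  congr 1
  split
  · rfl
  · rw [sub_zero]

lemma kosDiff_central {M : GWM K n} {c : ℕ} (u : Fin c → WeylAlgebra K n) (a b : ℤ)
    (w : WeylAlgebra K n) (hw : ∀ k, w * u k = u k * w)
    (ψ : KosLevel M c a) (T : {S : Finset (Fin c) // (S.card : ℤ) = b}) :
    kosDiff u a b (fun S => w • ψ S) T = w • kosDiff u a b ψ T := by
  simp only [kosDiff]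
  rw [Finset.smul_sum]
  refine Finset.sum_congr rfl fun k hk => ?_
  rw [smul_comm w ((-1 : ℤ) ^ ((T.1.filter (fun x => x < k)).card))]
  congr 1
  rw [← mul_smul, hw k, mul_smul]
  congr 1
  split
  · rfl
  · rw [smul_zero]

lemma dN {M : GWM K n} {r : ℕ} (j : ℤ) (i : ℤ) (ψ : KosLevel M n i)
    (T : {S : Finset (Fin n) // (S.card : ℤ) = i - 1}) :
    kosDiff (uo K n r) i (i-1)
      (fun S => (weylEuler K n + ((∑ k ∈ S.1, duf n r k : ℤ) : WeylAlgebra K n)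
        - (j : WeylAlgebra K n)) • ψ S) T
    = (weylEuler K n + ((∑ k ∈ T.1, duf n r k : ℤ) : WeylAlgebra K n)
        - (j : WeylAlgebra K n)) • kosDiff (uo K n r) i (i-1) ψ T := by
  obtain ⟨t, ht⟩ := T
  simp only [kosDiff]
  rw [Finset.smul_sum]
  refine Finset.sum_congr rfl fun k hk => ?_
  have hk' : k ∉ t := by simpa using hk
  have hcomm : (weylEuler K n + ((∑ x ∈ t, duf n r x : ℤ) : WeylAlgebra K n)
        - (j : WeylAlgebra K n)) * uo K n r k
      = uo K n r k * (weylEuler K n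
        + ((∑ x ∈ insert k t, duf n r x : ℤ) : WeylAlgebra K n)
        - (j : WeylAlgebra K n)) := by
    rw [Finset.sum_insert hk']
    rw [sub_mul, add_mul, euler_u (r := r) k,
      (Int.cast_commute (∑ x ∈ t, duf n r x) (uo K n r k)).eq,
      (Int.cast_commute j (uo K n r k)).eq, ← mul_add, ← mul_sub]
    congr 1
    push_cast
    abel
  rw [smul_comm (weylEuler K n + ((∑ x ∈ t, duf n r x : ℤ) : WeylAlgebra K n)
        - (j : WeylAlgebra K n)) ((-1 : ℤ) ^ ((t.filter (fun x => x < k)).card))]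
  congr 1
  rw [← mul_smul, hcomm, mul_smul]
  congr 1
  split
  · rfl
  · rw [smul_zero]
end

lemma main_induction {K : Type} [Field K] [CharZero K] {n : ℕ} {V : GWM K n}
    (r : ℕ) (hr : 1 ≤ r) (hrn : r ≤ n) (j i : ℤ)
    (he : (j + (n:ℤ) - r + 1) ≠ 0) :
    ∀ (a : ℕ) (ψ : KosLevel V n i),
      (∀ T, kosDiff (uo K n r) i (i-1) ψ T = 0) →
      (∀ S : {S : Finset (Fin n) // (S.card : ℤ) = i},
        (weylEuler K n + ((∑ k ∈ S.1, duf n r k : ℤ) : WeylAlgebra K n)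
          - (j : WeylAlgebra K n)) ^ a • ψ S = 0) →
      kosIsBoundary (uo K n r) i ψ := by
  have heK : ((j + (n:ℤ) - r + 1 : ℤ) : K) ≠ 0 := Int.cast_ne_zero.mpr he
  intro a
  induction a with
  | zero =>
      intro ψ hc hz
      refine ⟨fun _ => 0, ?_⟩
      funext T
      rw [kosDiff_zero]
      have h0 := hz T
      rw [pow_zero, one_smul] at h0
      exact h0.symm
  | succ a ih =>
      intro ψ hc hz
      obtain ⟨χ, hχ⟩ := ih
        (fun S => (weylEuler K n + ((∑ k ∈ S.1, duf n r k : ℤ) : WeylAlgebra K n)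
          - (j : WeylAlgebra K n)) • ψ S)
        (fun T => by rw [dN j i ψ T, hc T, smul_zero])
        (fun S => by rw [← mul_smul, ← pow_succ]; exact hz S)
      have hh : ∀ T : {S : Finset (Fin n) // (S.card : ℤ) = i},
          kosDiff (uo K n r) (i+1) i (fun S => kosHtp (vo K n r) i (i+1) ψ S) T
          = (weylEuler K n + ((∑ k ∈ T.1, duf n r k : ℤ) : WeylAlgebra K n)
            - (j : WeylAlgebra K n)) • ψ T
            + ((j + (n:ℤ) - r + 1 : ℤ) : WeylAlgebra K n) • ψ T := by
        intro T
        have h0 := homotopy_id (uo K n r) (vo K n r) (fun k l h => uv_comm k l h) i ψ T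
        have h1 : (fun S : {S : Finset (Fin n) // (S.card : ℤ) = i - 1}
            => kosDiff (uo K n r) i (i-1) ψ S) = fun _ => (0 : V.carrier) :=
          funext fun S => hc S
        rw [h1, kosHtp_zero, add_zero] at h0
        rw [h0, ← Finset.sum_smul, op_sum hr hrn T.1, ← add_smul]
        congr 1
        push_cast
        abel
      refine ⟨fun S => (algebraMap K (WeylAlgebra K n) (((j + (n:ℤ) - r + 1 : ℤ) : K)⁻¹))
        • (kosHtp (vo K n r) i (i+1) ψ S - χ S), ?_⟩
      funext T
      calc kosDiff (uo K n r) (i+1) i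
            (fun S => (algebraMap K (WeylAlgebra K n) (((j + (n:ℤ) - r + 1 : ℤ) : K)⁻¹))
              • (kosHtp (vo K n r) i (i+1) ψ S - χ S)) T
          = (algebraMap K (WeylAlgebra K n) (((j + (n:ℤ) - r + 1 : ℤ) : K)⁻¹))
            • kosDiff (uo K n r) (i+1) i
              (fun S => kosHtp (vo K n r) i (i+1) ψ S - χ S) T :=
            kosDiff_central _ _ _ _ (fun k => (Algebra.commutes _ _)) _ T
        _ = (algebraMap K (WeylAlgebra K n) (((j + (n:ℤ) - r + 1 : ℤ) : K)⁻¹))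
            • (kosDiff (uo K n r) (i+1) i (fun S => kosHtp (vo K n r) i (i+1) ψ S) T
              - kosDiff (uo K n r) (i+1) i χ T) := by rw [kosDiff_sub]
        _ = (algebraMap K (WeylAlgebra K n) (((j + (n:ℤ) - r + 1 : ℤ) : K)⁻¹))
            • (((j + (n:ℤ) - r + 1 : ℤ) : WeylAlgebra K n) • ψ T) := by
            rw [hh T, congrFun hχ T, add_sub_cancel_left]
        _ = ψ T := by
            rw [← map_intCast (algebraMap K (WeylAlgebra K n)) (j + (n:ℤ) - r + 1),
              ← mul_smul, ← map_mul, inv_mul_cancel₀ heK, map_one, one_smul]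


/-- Theorem `induct`(3).  Let `V` be a generalized Eulerian
`A_n(K)`-module and `1 ≤ r ≤ n`.  Then for every `ν ≥ 0` the Koszul cohomology
`H^ν(X_1, …, X_{r-1}, ∂_r, …, ∂_n; V)` is concentrated in degree `-n + r - 1`.  Here `H^ν`
of the Koszul complex on the `n` commuting operators `X_1, …, X_{r-1}, ∂_r, …, ∂_n` (of
degrees `+1` resp. `-1`) is its homology in level `n - ν`: every homogeneous cycle whose
internal degree is `≠ -n + r - 1` is a boundary. -/
theorem mixed_koszul_concentrated
    (K : Type) [Field K] [CharZero K] (n r : ℕ) (hr : 1 ≤ r) (hrn : r ≤ n)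
    (V : GWM K n) (hV : V.IsGenEulerian) (ν : ℕ) (j : ℤ)
    (hj : j ≠ -(n : ℤ) + (r : ℤ) - 1)
    (φ : KosLevel V n ((n : ℤ) - (ν : ℤ)))
    (hcyc : kosIsCycle (fun k : Fin n => if (k : ℕ) < r - 1 then Wx K k else Wd K k)
      ((n : ℤ) - (ν : ℤ)) φ)
    (hhom : kosHomog (fun k : Fin n => if (k : ℕ) < r - 1 then (1 : ℤ) else (-1 : ℤ))
      ((n : ℤ) - (ν : ℤ)) j φ) :
    kosIsBoundary (fun k : Fin n => if (k : ℕ) < r - 1 then Wx K k else Wd K k)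
      ((n : ℤ) - (ν : ℤ)) φ := by
  have he : (j + (n:ℤ) - r + 1) ≠ 0 := by omega
  have key : ∀ S : {S : Finset (Fin n) // (S.card : ℤ) = (n : ℤ) - (ν : ℤ)}, ∃ a, 1 ≤ a ∧
      (weylEuler K n + ((∑ k ∈ S.1, duf n r k : ℤ) : WeylAlgebra K n)
        - (j : WeylAlgebra K n)) ^ a • φ S = 0 := by
    intro S
    obtain ⟨a, ha1, ha2⟩ := hV (j - ∑ k ∈ S.1, duf n r k) (φ S) (hhom S)
    refine ⟨a, ha1, ?_⟩
    have hbase : weylEuler K n - (((j - ∑ k ∈ S.1, duf n r k : ℤ)) : WeylAlgebra K n)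
        = weylEuler K n + ((∑ k ∈ S.1, duf n r k : ℤ) : WeylAlgebra K n)
          - (j : WeylAlgebra K n) := by push_cast; abel
    rw [hbase] at ha2
    exact ha2
  choose af haf1 haf2 using key
  have hA : ∀ S : {S : Finset (Fin n) // (S.card : ℤ) = (n : ℤ) - (ν : ℤ)},
      (weylEuler K n + ((∑ k ∈ S.1, duf n r k : ℤ) : WeylAlgebra K n)
        - (j : WeylAlgebra K n)) ^ (Finset.univ.sup af) • φ S = 0 := by
    intro S
    have hle : af S ≤ Finset.univ.sup af := Finset.le_sup (Finset.mem_univ S)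
    rw [← Nat.sub_add_cancel hle, pow_add, mul_smul, haf2 S, smul_zero]
  exact main_induction r hr hrn j ((n : ℤ) - (ν : ℤ)) he _ φ hcyc hA
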